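/- arXiv:2006.13001 — 3 statements merged into one kernel-verified Lean document; each statement's English description precedes it below -/
import Mathlib

section
/- For the complex Lorenz system X' = -κX + gY, Y' = dgX - γY + gXZ, Z' = -4g Re(conj(X)Y) - 2γZ with κ, γ > 0, g a nonzero real, and d < 0, any solution on [0,T) satisfies 4|d||X(t)|² + 4|Y(t)|² + Z(t)² ≤ exp(-2t·min{κ,γ})·(4|d||X(0)|² + 4|Y(0)|² + Z(0)²) for all t in [0,T). -/
/-!
Along a solution, `V = 4|d|‖X‖² + 4‖Y‖² + Z²` satisfies
`V' = -8|d|κ‖X‖² - 8γ‖Y‖² - 4γZ² ≤ -2 min(κ, γ) V`: for `d ≤ 0` the coupling terms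
`g Re(X̄Y)` and `g Z Re(X̄Y)` cancel. Grönwall's inequality then gives the exponential decay.
-/

open Real Set ComplexConjugate

theorem le_exp_mul_of_hasDerivAt_le_mul {f f' : ℝ → ℝ} {c a b : ℝ}
    (hf : ∀ t ∈ Ico a b, HasDerivAt f (f' t) t) (bound : ∀ t ∈ Ico a b, f' t ≤ c * f t) :
    ∀ t ∈ Ico a b, f t ≤ exp (c * (t - a)) * f a := by
  intro t ht
  have hsub : Icc a t ⊆ Ico a b := Icc_subset_Ico_right ht.2
  rw [mul_comm, ← gronwallBound_ε0]
  refine le_gronwallBound_of_liminf_deriv_right_le (f' := f')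
    (fun s hs => (hf s (hsub hs)).continuousAt.continuousWithinAt)
    (fun s hs _ hr =>
      (hf s (hsub (Ico_subset_Icc_self hs))).hasDerivWithinAt.liminf_right_slope_le hr)
    le_rfl (fun s hs => by simpa using bound s (hsub (Ico_subset_Icc_self hs)))
    t ⟨ht.1, le_rfl⟩

theorem HasDerivAt.complex_norm_sq {f : ℝ → ℂ} {f' : ℂ} {t : ℝ} (hf : HasDerivAt f f' t) :
    HasDerivAt (fun s => ‖f s‖ ^ 2) (2 * (conj (f t) * f').re) t := by
  simpa [Complex.inner, mul_comm] using hf.norm_sq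

theorem hasDerivAt_lorenz_lyapunov {κ γ g d t : ℝ} {X Y : ℝ → ℂ} {Z : ℝ → ℝ} (hd : d ≤ 0)
    (hX : HasDerivAt X (-(κ:ℂ) * X t + (g:ℂ) * Y t) t)
    (hY : HasDerivAt Y ((d:ℂ) * (g:ℂ) * X t - (γ:ℂ) * Y t + (g:ℂ) * X t * (Z t : ℂ)) t)
    (hZ : HasDerivAt Z (-4 * g * (conj (X t) * Y t).re - 2 * γ * Z t) t) :
    HasDerivAt (fun s => 4 * |d| * ‖X s‖ ^ 2 + 4 * ‖Y s‖ ^ 2 + Z s ^ 2)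
      (-8 * |d| * κ * ‖X t‖ ^ 2 - 8 * γ * ‖Y t‖ ^ 2 - 4 * γ * Z t ^ 2) t := by
  refine ((((hX.complex_norm_sq).const_mul (4 * |d|)).add
    ((hY.complex_norm_sq).const_mul 4)).add (hZ.pow 2)).congr_deriv ?_
  rw [abs_of_nonpos hd]
  simp only [Complex.mul_re, Complex.mul_im, Complex.add_re, Complex.add_im, Complex.sub_re,
    Complex.sub_im, Complex.neg_re, Complex.neg_im, Complex.conj_re, Complex.conj_im,
    Complex.ofReal_re, Complex.ofReal_im, Complex.sq_norm, Complex.normSq_apply]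
  ring

theorem lorenz_decay_neg_d_general (κ γ g d T : ℝ) (X Y : ℝ → ℂ) (Z : ℝ → ℝ)
    (hγ : 0 < γ) (hd2 : d < 0)
    (hX : ∀ t ∈ Set.Ico (0:ℝ) T,
      HasDerivAt X (-(κ:ℂ) * X t + (g:ℂ) * Y t) t)
    (hY : ∀ t ∈ Set.Ico (0:ℝ) T,
      HasDerivAt Y ((d:ℂ) * (g:ℂ) * X t - (γ:ℂ) * Y t + (g:ℂ) * X t * (Z t : ℂ)) t)
    (hZ : ∀ t ∈ Set.Ico (0:ℝ) T,
      HasDerivAt Z (-4 * g * ((starRingEnd ℂ) (X t) * Y t).re - 2 * γ * Z t) t) :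
    ∀ t ∈ Set.Ico (0:ℝ) T,
      4 * |d| * ‖X t‖ ^ 2 + 4 * ‖Y t‖ ^ 2 + Z t ^ 2 ≤
        Real.exp (-2 * t * min κ γ) *
          (4 * |d| * ‖X 0‖ ^ 2 + 4 * ‖Y 0‖ ^ 2 + Z 0 ^ 2) := by
  intro t ht
  have dissipation : ∀ s ∈ Ico (0:ℝ) T,
      -8 * |d| * κ * ‖X s‖ ^ 2 - 8 * γ * ‖Y s‖ ^ 2 - 4 * γ * Z s ^ 2 ≤
        -2 * min κ γ * (4 * |d| * ‖X s‖ ^ 2 + 4 * ‖Y s‖ ^ 2 + Z s ^ 2) := fun s _ => by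
    have hmκ : min κ γ ≤ κ := min_le_left κ γ
    have hmγ : min κ γ ≤ γ := min_le_right κ γ
    have hX_nonneg : 0 ≤ |d| * ‖X s‖ ^ 2 := by positivity
    nlinarith [sq_nonneg ‖Y s‖, sq_nonneg (Z s)]
  have decay := le_exp_mul_of_hasDerivAt_le_mul
    (fun s hs => hasDerivAt_lorenz_lyapunov hd2.le (hX s hs) (hY s hs) (hZ s hs))
    dissipation t ht
  rwa [sub_zero, mul_right_comm _ (min κ γ)] at decay

/-- Exponential decay of the Lyapunov function `4|d||X|² + 4|Y|² + Z²` for the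
complex Lorenz system when `d < 0`. -/
theorem lorenz_decay_neg_d (κ γ g d T : ℝ) (X Y : ℝ → ℂ) (Z : ℝ → ℝ)
    (hκ : 0 < κ) (hγ : 0 < γ) (hg : g ≠ 0) (hd1 : -1 < d) (hd2 : d < 0)
    (hX : ∀ t ∈ Set.Ico (0:ℝ) T,
      HasDerivAt X (-(κ:ℂ) * X t + (g:ℂ) * Y t) t)
    (hY : ∀ t ∈ Set.Ico (0:ℝ) T,
      HasDerivAt Y ((d:ℂ) * (g:ℂ) * X t - (γ:ℂ) * Y t + (g:ℂ) * X t * (Z t : ℂ)) t)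
    (hZ : ∀ t ∈ Set.Ico (0:ℝ) T,
      HasDerivAt Z (-4 * g * ((starRingEnd ℂ) (X t) * Y t).re - 2 * γ * Z t) t) :
    ∀ t ∈ Set.Ico (0:ℝ) T,
      4 * |d| * ‖X t‖ ^ 2 + 4 * ‖Y t‖ ^ 2 + Z t ^ 2 ≤
        Real.exp (-2 * t * min κ γ) *
          (4 * |d| * ‖X 0‖ ^ 2 + 4 * ‖Y 0‖ ^ 2 + Z 0 ^ 2) :=
  lorenz_decay_neg_d_general κ γ g d T X Y Z hγ hd2 hX hY hZ
end

section
/- The complex Lorenz system A' = -(κ + iω)A + gS, S' = -(γ + iω)S + gAD, D' = -4g Re(conj(A)S) - 2γ(D - d) with d ∈ (-1,1), ω ∈ ℝ, g ≠ 0, κ, γ > 0 has, for every initial condition (A(0), S(0), D(0)) ∈ ℂ × ℂ × ℝ, a unique solution defined on all of [0, ∞). -/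
/-- `(A, S, D)` is a global solution of the complex Lorenz system. -/
def IsLorenzSolution (κ γ g d ω : ℝ) (A S : ℝ → ℂ) (D : ℝ → ℝ) : Prop :=
  ∀ t ≥ (0:ℝ),
    HasDerivAt A (-((κ:ℂ) + (ω:ℂ) * Complex.I) * A t + (g:ℂ) * S t) t ∧
    HasDerivAt S (-((γ:ℂ) + (ω:ℂ) * Complex.I) * S t + (g:ℂ) * A t * (D t : ℂ)) t ∧
    HasDerivAt D (-4 * g * ((starRingEnd ℂ) (A t) * S t).re - 2 * γ * (D t - d)) t

/-!
The energy `V = ‖A‖² + ‖S‖² + D²/4` controls the flow: the cubic terms cancel in `V'`, and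
`V' = -2κ‖A‖² - 2γ‖S‖² + 2g Re(conj A S) - γD² + γdD ≤ |g| V + γd²/2`,
so by Grönwall a solution stays in a bounded sublevel set of `V` on every finite time interval.
Switching the field off smoothly outside a large sublevel set keeps this estimate and makes the
field globally Lipschitz, so Picard–Lindelöf solves the cut-off system; by the estimate, that
solution never reaches the region where the cut-off acts. On a sublevel set the field is
Lipschitz, which gives forward uniqueness, and the solutions on `[0, n)` glue to one on `[0, ∞)`.
-/

open Set Function Topology Bornology ComplexConjugate
open scoped NNReal

section ODE

variable {E : Type*} [NormedAddCommGroup E] [NormedSpace ℝ E]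

theorem hasDerivAt_prodMk_iff {F : Type*} [NormedAddCommGroup F] [NormedSpace ℝ F]
    {f : ℝ → E} {g : ℝ → F} {a : E} {b : F} {t : ℝ} :
    HasDerivAt (fun s => (f s, g s)) (a, b) t ↔ HasDerivAt f a t ∧ HasDerivAt g b t :=
  ⟨fun h => ⟨(ContinuousLinearMap.fst ℝ E F).hasFDerivAt.comp_hasDerivAt t h,
    (ContinuousLinearMap.snd ℝ E F).hasFDerivAt.comp_hasDerivAt t h⟩,
   fun h => h.1.prodMk h.2⟩

theorem LipschitzWith.exists_forall_mem_Ioo_hasDerivAt [CompleteSpace E] {f : E → E} {K : ℝ≥0}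
    (hf : LipschitzWith K f) {C : ℝ} (hC : ∀ x, ‖f x‖ ≤ C) (x₀ : E) {T : ℝ} (hT : 0 ≤ T) :
    ∃ x : ℝ → E, x 0 = x₀ ∧ ∀ t ∈ Ioo (-T) T, HasDerivAt x (f (x t)) t := by
  lift C to ℝ≥0 using (norm_nonneg _).trans (hC x₀)
  lift T to ℝ≥0 using hT
  have hPL : IsPicardLindelof (fun _ => f) (tmin := -T) (tmax := T) ⟨0, by simp⟩ x₀
      (C * T) 0 C K :=
    .of_time_independent (fun x _ => hC x) hf.lipschitzOnWith (by simp)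
  obtain ⟨x, hx0, hx⟩ := hPL.exists_eq_forall_mem_Icc_hasDerivWithinAt₀
  exact ⟨x, hx0, fun t ht =>
    (hx t (Ioo_subset_Icc_self ht)).hasDerivAt (Icc_mem_nhds ht.1 ht.2)⟩

theorem exists_forall_hasDerivAt_of_forall_Ico {v : E → E} {x₀ : E}
    (hex : ∀ T > 0, ∃ x : ℝ → E, x 0 = x₀ ∧ ∀ t ∈ Ico 0 T, HasDerivAt x (v (x t)) t)
    (huniq : ∀ (T : ℝ) (x y : ℝ → E), (∀ t ∈ Ico 0 T, HasDerivAt x (v (x t)) t) →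
      (∀ t ∈ Ico 0 T, HasDerivAt y (v (y t)) t) → x 0 = y 0 → EqOn x y (Ico 0 T)) :
    ∃ x : ℝ → E, x 0 = x₀ ∧ ∀ t ≥ 0, HasDerivAt x (v (x t)) t := by
  choose sol hsol0 hsol using fun n : ℕ => hex (n + 1) n.cast_add_one_pos
  have hagree : ∀ m n : ℕ, ∀ t ∈ Ico 0 ((m : ℝ) + 1), t < n + 1 → sol m t = sol n t :=
    fun m n t ht htn => huniq (min (m + 1) (n + 1)) _ _
      (fun s hs => hsol m s ⟨hs.1, hs.2.trans_le (min_le_left _ _)⟩)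
      (fun s hs => hsol n s ⟨hs.1, hs.2.trans_le (min_le_right _ _)⟩)
      ((hsol0 m).trans (hsol0 n).symm) ⟨ht.1, lt_min ht.2 htn⟩
  set x : ℝ → E := fun t => sol ⌈t⌉₊ t
  have hx : ∀ n : ℕ, ∀ t ∈ Ico 0 ((n : ℝ) + 1), x t = sol n t := fun n t ht =>
    hagree _ n t ⟨ht.1, (Nat.le_ceil t).trans_lt (lt_add_one _)⟩ ht.2
  -- For `t ≤ 0` the glued curve is `sol 0`, which keeps it (two-sided) differentiable at `0`.
  have hx_nonpos : ∀ t ≤ 0, x t = sol 0 t := fun t ht => by simp [x, Nat.ceil_eq_zero.2 ht]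
  refine ⟨x, (hx_nonpos 0 le_rfl).trans (hsol0 0), fun t ht => ?_⟩
  set N := ⌈t⌉₊
  have htN : t < N + 1 := (Nat.le_ceil t).trans_lt (lt_add_one _)
  have hev : x =ᶠ[𝓝 t] sol N := by
    rcases ht.eq_or_lt with rfl | ht
    · filter_upwards [Iio_mem_nhds htN] with s hs
      rcases le_or_gt s 0 with hs0 | hs0
      · simpa [N] using hx_nonpos s hs0
      · exact hx N s ⟨hs0.le, hs⟩
    · filter_upwards [Ioo_mem_nhds ht htN] with s hs using hx N s ⟨hs.1.le, hs.2⟩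
  rw [hx N t ⟨ht, htN⟩]
  exact (hsol N t ⟨ht, htN⟩).congr_of_eventuallyEq hev

end ODE

section Lyapunov

variable {E : Type*} [NormedAddCommGroup E] [NormedSpace ℝ E]
  {v : E → E} {V : E → ℝ} {K ε : ℝ}

/-- The field `v` switched off smoothly across the shell `M ≤ V ≤ M + 1`. -/
noncomputable def cutoffField (v : E → E) (V : E → ℝ) (M : ℝ) (x : E) : E :=
  (1 - Real.smoothTransition (V x - M)) • v x

theorem cutoffField_of_le {M : ℝ} {x : E} (h : V x ≤ M) : cutoffField v V M x = v x := by
  simp [cutoffField, Real.smoothTransition.zero_of_nonpos (sub_nonpos.2 h)]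

theorem support_cutoffField_subset (M : ℝ) :
    support (cutoffField v V M) ⊆ {x | V x ≤ M + 1} := fun x hx => by
  by_contra h
  have h1 : 1 ≤ V x - M := le_sub_iff_add_le'.2 (not_le.1 h).le
  simp [cutoffField, Real.smoothTransition.one_of_one_le h1] at hx

theorem ContDiff.cutoffField (hv : ContDiff ℝ 1 v) (hV : ContDiff ℝ 1 V) (M : ℝ) :
    ContDiff ℝ 1 (cutoffField v V M) :=
  (contDiff_const.sub (Real.smoothTransition.contDiff.comp (hV.sub contDiff_const))).smul hv

structure IsGronwallLyapunov (v : E → E) (V : E → ℝ) (K ε : ℝ) : Prop where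
  contDiff : ContDiff ℝ 1 V
  nonneg : ∀ x, 0 ≤ V x
  isBounded_sublevel : ∀ c, IsBounded {x | V x ≤ c}
  fderiv_le : ∀ x, fderiv ℝ V x (v x) ≤ K * V x + ε
  K_nonneg : 0 ≤ K
  ε_nonneg : 0 ≤ ε

namespace IsGronwallLyapunov

theorem le_gronwallBound (hL : IsGronwallLyapunov v V K ε) {x : ℝ → E} {T : ℝ}
    (hx : ∀ t ∈ Ico 0 T, HasDerivAt x (v (x t)) t) {t : ℝ} (ht : t ∈ Ico 0 T) :
    V (x t) ≤ gronwallBound (V (x 0)) K ε T := by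
  have hV := hL.contDiff.differentiable one_ne_zero
  have hbound := le_gronwallBound_of_liminf_deriv_right_le (a := 0) (b := t)
    (hV.continuous.comp_continuousOn
      fun s hs => (hx s ⟨hs.1, hs.2.trans_lt ht.2⟩).continuousAt.continuousWithinAt)
    (fun s hs r hr => ((hV (x s)).hasFDerivAt.comp_hasDerivAt s
      (hx s ⟨hs.1, hs.2.trans ht.2⟩)).hasDerivWithinAt.liminf_right_slope_le hr)
    le_rfl (fun s _ => hL.fderiv_le (x s)) t ⟨ht.1, le_rfl⟩
  rw [sub_zero] at hbound
  exact hbound.trans (gronwallBound_mono (hL.nonneg _) hL.ε_nonneg hL.K_nonneg ht.2.le)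

theorem cutoff (hL : IsGronwallLyapunov v V K ε) (M : ℝ) :
    IsGronwallLyapunov (cutoffField v V M) V K ε where
  __ := hL
  fderiv_le x := by
    have hφ₀ := Real.smoothTransition.nonneg (V x - M)
    have hφ₁ := Real.smoothTransition.le_one (V x - M)
    have hpos : 0 ≤ K * V x + ε :=
      add_nonneg (mul_nonneg hL.K_nonneg (hL.nonneg x)) hL.ε_nonneg
    rw [_root_.cutoffField, map_smul, smul_eq_mul]
    nlinarith [hL.fderiv_le x]

theorem hasCompactSupport_cutoffField [ProperSpace E] (hL : IsGronwallLyapunov v V K ε)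
    (M : ℝ) :
    HasCompactSupport (_root_.cutoffField v V M) :=
  (hL.isBounded_sublevel (M + 1)).isCompact_closure.of_isClosed_subset isClosed_closure
    (closure_mono (support_cutoffField_subset (v := v) M))

theorem exists_forall_mem_Ico_hasDerivAt [ProperSpace E] (hL : IsGronwallLyapunov v V K ε)
    (hv : ContDiff ℝ 1 v) (x₀ : E) {T : ℝ} (hT : 0 < T) :
    ∃ x : ℝ → E, x 0 = x₀ ∧ ∀ t ∈ Ico 0 T, HasDerivAt x (v (x t)) t := by
  set M := gronwallBound (V x₀) K ε T
  have hs := hL.hasCompactSupport_cutoffField M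
  have hc := hv.cutoffField hL.contDiff M
  obtain ⟨L, hLip⟩ := hc.lipschitzWith_of_hasCompactSupport hs one_ne_zero
  obtain ⟨C, hC⟩ := hs.exists_bound_of_continuous hc.continuous
  obtain ⟨x, hx0, hx⟩ := hLip.exists_forall_mem_Ioo_hasDerivAt hC x₀ hT.le
  have hcut : ∀ t ∈ Ico 0 T, HasDerivAt x (cutoffField v V M (x t)) t :=
    fun t ht => hx t ⟨(neg_neg_of_pos hT).trans_le ht.1, ht.2⟩
  refine ⟨x, hx0, fun t ht => ?_⟩
  have hxM : V (x t) ≤ M := by simpa only [hx0] using (hL.cutoff M).le_gronwallBound hcut ht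
  simpa only [cutoffField_of_le hxM] using hcut t ht

theorem eqOn_Ico [ProperSpace E] (hL : IsGronwallLyapunov v V K ε) (hv : ContDiff ℝ 1 v)
    {x y : ℝ → E} {T : ℝ}
    (hx : ∀ t ∈ Ico 0 T, HasDerivAt x (v (x t)) t) (hy : ∀ t ∈ Ico 0 T, HasDerivAt y (v (y t)) t)
    (h0 : x 0 = y 0) : EqOn x y (Ico 0 T) := by
  intro t ht
  set M := gronwallBound (V (x 0)) K ε T with hM
  obtain ⟨L, hLip⟩ := (hv.cutoffField hL.contDiff M).lipschitzWith_of_hasCompactSupport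
    (hL.hasCompactSupport_cutoffField M) one_ne_zero
  have hvM : LipschitzOnWith L v {z | V z ≤ M} := fun a ha b hb => by
    simpa only [cutoffField_of_le ha, cutoffField_of_le hb] using hLip a b
  have hxM : ∀ s ∈ Ico 0 T, V (x s) ≤ M := fun s hs => hL.le_gronwallBound hx hs
  have hyM : ∀ s ∈ Ico 0 T, V (y s) ≤ M := fun s hs =>
    (hL.le_gronwallBound hy hs).trans_eq (by rw [hM, h0])
  refine ODE_solution_unique_of_mem_Icc_right (v := fun _ => v) (s := fun _ => {z | V z ≤ M})
    (fun _ _ => hvM) ?_ (fun s hs => (hx s ⟨hs.1, hs.2.trans ht.2⟩).hasDerivWithinAt)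
    (fun s hs => hxM s ⟨hs.1, hs.2.trans ht.2⟩) ?_
    (fun s hs => (hy s ⟨hs.1, hs.2.trans ht.2⟩).hasDerivWithinAt)
    (fun s hs => hyM s ⟨hs.1, hs.2.trans ht.2⟩) h0 ⟨ht.1, le_rfl⟩
  · exact fun s hs => (hx s ⟨hs.1, hs.2.trans_lt ht.2⟩).continuousAt.continuousWithinAt
  · exact fun s hs => (hy s ⟨hs.1, hs.2.trans_lt ht.2⟩).continuousAt.continuousWithinAt

theorem exists_forall_hasDerivAt [ProperSpace E] (hL : IsGronwallLyapunov v V K ε)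
    (hv : ContDiff ℝ 1 v) (x₀ : E) :
    ∃ x : ℝ → E, x 0 = x₀ ∧ ∀ t ≥ 0, HasDerivAt x (v (x t)) t :=
  exists_forall_hasDerivAt_of_forall_Ico
    (fun _ hT => hL.exists_forall_mem_Ico_hasDerivAt hv x₀ hT)
    (fun _ _ _ hx hy h0 => hL.eqOn_Ico hv hx hy h0)

end IsGronwallLyapunov

end Lyapunov

section Lorenz

variable {κ γ g d ω : ℝ}

noncomputable def lorenzField (κ γ g d ω : ℝ) (p : ℂ × ℂ × ℝ) : ℂ × ℂ × ℝ :=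
  (-((κ:ℂ) + (ω:ℂ) * Complex.I) * p.1 + (g:ℂ) * p.2.1,
   -((γ:ℂ) + (ω:ℂ) * Complex.I) * p.2.1 + (g:ℂ) * p.1 * (p.2.2 : ℂ),
   -4 * g * (conj p.1 * p.2.1).re - 2 * γ * (p.2.2 - d))

noncomputable def lorenzEnergy (p : ℂ × ℂ × ℝ) : ℝ := ‖p.1‖ ^ 2 + ‖p.2.1‖ ^ 2 + p.2.2 ^ 2 / 4

theorem isLorenzSolution_iff {A S : ℝ → ℂ} {D : ℝ → ℝ} :
    IsLorenzSolution κ γ g d ω A S D ↔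
      ∀ t ≥ 0,
        HasDerivAt (fun s => (A s, S s, D s)) (lorenzField κ γ g d ω (A t, S t, D t)) t := by
  simp only [IsLorenzSolution, lorenzField, hasDerivAt_prodMk_iff]

theorem contDiff_lorenzField : ContDiff ℝ 1 (lorenzField κ γ g d ω) := by
  have : ContDiff ℝ 1 (fun r : ℝ => (r : ℂ)) := Complex.ofRealCLM.contDiff
  have : ContDiff ℝ 1 Complex.re := Complex.reCLM.contDiff
  have : ContDiff ℝ 1 Complex.im := Complex.imCLM.contDiff
  unfold lorenzField
  fun_prop

theorem contDiff_lorenzEnergy : ContDiff ℝ 1 lorenzEnergy :=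
  (((contDiff_norm_sq ℝ).comp contDiff_fst).add
    ((contDiff_norm_sq ℝ).comp contDiff_snd.fst)).add ((contDiff_snd.snd.pow 2).div_const 4)

theorem fderiv_lorenzEnergy_apply (p w : ℂ × ℂ × ℝ) :
    fderiv ℝ lorenzEnergy p w =
      2 * inner ℝ p.1 w.1 + 2 * inner ℝ p.2.1 w.2.1 + p.2.2 * w.2.2 / 2 := by
  have hA := (hasFDerivAt_fst (𝕜 := ℝ) (p := p)).norm_sq
  have hS := (hasFDerivAt_snd (𝕜 := ℝ) (p := p)).fst.norm_sq
  have hD := ((hasFDerivAt_snd (𝕜 := ℝ) (p := p)).snd.pow 2).const_mul (1 / 4)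
  have hV : lorenzEnergy = fun q => ‖q.1‖ ^ 2 + ‖q.2.1‖ ^ 2 + 1 / 4 * q.2.2 ^ 2 := by
    funext q; rw [lorenzEnergy]; ring
  rw [hV, ((hA.fun_add hS).fun_add hD).fderiv]
  simp
  ring

theorem fderiv_lorenzEnergy_lorenzField (p : ℂ × ℂ × ℝ) :
    fderiv ℝ lorenzEnergy p (lorenzField κ γ g d ω p) =
      -2 * κ * ‖p.1‖ ^ 2 - 2 * γ * ‖p.2.1‖ ^ 2 + 2 * g * (conj p.1 * p.2.1).re
        - γ * p.2.2 ^ 2 + γ * d * p.2.2 := by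
  rw [fderiv_lorenzEnergy_apply]
  simp only [lorenzField, Complex.inner, Complex.sq_norm, Complex.normSq_apply, Complex.mul_re,
    Complex.mul_im, Complex.conj_re, Complex.conj_im, Complex.add_re, Complex.add_im,
    Complex.neg_re, Complex.neg_im, Complex.ofReal_re, Complex.ofReal_im, Complex.I_re,
    Complex.I_im]
  ring

theorem two_mul_abs_re_conj_mul_le (a b : ℂ) : 2 * |(conj a * b).re| ≤ ‖a‖ ^ 2 + ‖b‖ ^ 2 := by
  have h : |(conj a * b).re| ≤ ‖a‖ * ‖b‖ := by
    simpa using Complex.abs_re_le_norm (conj a * b)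
  nlinarith [sq_nonneg (‖a‖ - ‖b‖)]

theorem fderiv_lorenzEnergy_lorenzField_le (hκ : 0 ≤ κ) (hγ : 0 ≤ γ) (p : ℂ × ℂ × ℝ) :
    fderiv ℝ lorenzEnergy p (lorenzField κ γ g d ω p) ≤ |g| * lorenzEnergy p + γ * d ^ 2 / 2 := by
  have hAS : 2 * g * (conj p.1 * p.2.1).re ≤ |g| * (‖p.1‖ ^ 2 + ‖p.2.1‖ ^ 2) :=
    calc 2 * g * (conj p.1 * p.2.1).re ≤ |2 * g * (conj p.1 * p.2.1).re| := le_abs_self _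
    _ = |g| * (2 * |(conj p.1 * p.2.1).re|) := by rw [abs_mul, abs_mul, abs_two]; ring
    _ ≤ |g| * (‖p.1‖ ^ 2 + ‖p.2.1‖ ^ 2) := by gcongr; exact two_mul_abs_re_conj_mul_le _ _
  have hdD : d * p.2.2 ≤ (d ^ 2 + p.2.2 ^ 2) / 2 := by nlinarith [sq_nonneg (d - p.2.2)]
  rw [fderiv_lorenzEnergy_lorenzField, lorenzEnergy]
  nlinarith [sq_nonneg p.2.2, abs_nonneg g, sq_nonneg ‖p.1‖, sq_nonneg ‖p.2.1‖]

theorem norm_le_sqrt_lorenzEnergy (p : ℂ × ℂ × ℝ) : ‖p‖ ≤ √(4 * lorenzEnergy p) := by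
  have hA := sq_nonneg ‖p.1‖
  have hS := sq_nonneg ‖p.2.1‖
  have hD := sq_nonneg p.2.2
  refine norm_prod_le_iff.2 ⟨?_, norm_prod_le_iff.2 ⟨?_, ?_⟩⟩ <;> apply Real.le_sqrt_of_sq_le
  all_goals simp only [lorenzEnergy, Real.norm_eq_abs, sq_abs]; linarith

theorem isGronwallLyapunov_lorenzEnergy (hκ : 0 ≤ κ) (hγ : 0 ≤ γ) :
    IsGronwallLyapunov (lorenzField κ γ g d ω) lorenzEnergy |g| (γ * d ^ 2 / 2) where
  contDiff := contDiff_lorenzEnergy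
  nonneg p := by unfold lorenzEnergy; positivity
  isBounded_sublevel c := isBounded_iff_forall_norm_le.2 ⟨√(4 * c), fun p hp =>
    (norm_le_sqrt_lorenzEnergy p).trans (Real.sqrt_le_sqrt (by linarith [hp.out]))⟩
  fderiv_le := fderiv_lorenzEnergy_lorenzField_le hκ hγ
  K_nonneg := abs_nonneg g
  ε_nonneg := by positivity

end Lorenz

theorem lorenz_global_existence_uniqueness_general (κ γ g d ω : ℝ)
    (hκ : 0 < κ) (hγ : 0 < γ)
    (A0 S0 : ℂ) (D0 : ℝ) :
    ∃ (A S : ℝ → ℂ) (D : ℝ → ℝ),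
      (A 0 = A0 ∧ S 0 = S0 ∧ D 0 = D0 ∧ IsLorenzSolution κ γ g d ω A S D) ∧
      ∀ (A' S' : ℝ → ℂ) (D' : ℝ → ℝ),
        (A' 0 = A0 ∧ S' 0 = S0 ∧ D' 0 = D0 ∧ IsLorenzSolution κ γ g d ω A' S' D') →
        ∀ t ≥ (0:ℝ), A' t = A t ∧ S' t = S t ∧ D' t = D t := by
  have hL := isGronwallLyapunov_lorenzEnergy (g := g) (d := d) (ω := ω) hκ.le hγ.le
  obtain ⟨x, hx0, hx⟩ := hL.exists_forall_hasDerivAt contDiff_lorenzField (A0, S0, D0)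
  refine ⟨fun t => (x t).1, fun t => (x t).2.1, fun t => (x t).2.2,
    ⟨by simp [hx0], by simp [hx0], by simp [hx0], isLorenzSolution_iff.2 hx⟩, ?_⟩
  rintro A' S' D' ⟨hA0, hS0, hD0, hsol⟩ t ht
  have h := hL.eqOn_Ico contDiff_lorenzField (T := t + 1)
    (fun s hs => isLorenzSolution_iff.1 hsol s hs.1) (fun s hs => hx s hs.1)
    (by simp [hA0, hS0, hD0, hx0]) ⟨ht, lt_add_one t⟩
  simpa [Prod.ext_iff] using h

/-- Global existence and uniqueness for the complex Lorenz system: for every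
initial condition there is a unique solution defined on all of `[0, ∞)`. -/
theorem lorenz_global_existence_uniqueness (κ γ g d ω : ℝ)
    (hκ : 0 < κ) (hγ : 0 < γ) (hg : g ≠ 0) (hd1 : -1 < d) (hd2 : d < 1)
    (A0 S0 : ℂ) (D0 : ℝ) :
    ∃ (A S : ℝ → ℂ) (D : ℝ → ℝ),
      (A 0 = A0 ∧ S 0 = S0 ∧ D 0 = D0 ∧ IsLorenzSolution κ γ g d ω A S D) ∧
      ∀ (A' S' : ℝ → ℂ) (D' : ℝ → ℝ),
        (A' 0 = A0 ∧ S' 0 = S0 ∧ D' 0 = D0 ∧ IsLorenzSolution κ γ g d ω A' S' D') →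
        ∀ t ≥ (0:ℝ), A' t = A t ∧ S' t = S t ∧ D' t = D t :=
  lorenz_global_existence_uniqueness_general κ γ g d ω hκ hγ A0 S0 D0
end

section
/- If g²d < κγ (with κ, γ > 0, g ≠ 0, d ∈ (-1,1)), then for any solution of the complex Lorenz system A' = -(κ + iω)A + gS, S' = -(γ + iω)S + gAD, D' = -4g Re(conj(A)S) - 2γ(D - d), the quantities A(t), S(t), and D(t) - d converge to 0 exponentially fast as t → ∞. -/
/-!
The weighted energy `V = ρ‖A‖² + ‖S‖² + (D - d)²/4` is a strict Lyapunov function. Along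
solutions the rotation `ω` drops out and the terms `g D Re(Ā S)` coming from `‖S‖²` and
`(D - d)²/4` cancel, so
`V' = -2κρ‖A‖² - 2γ‖S‖² - γ(D - d)² + 2g(ρ + d) Re(Ā S)`.
The quadratic form in `(‖A‖, ‖S‖)` is negative definite iff `g²(ρ + d)² < 4ρκγ`, and a weight
`ρ > 0` with this property exists because `g²d < κγ`. Keeping a little of the margin gives
`V' ≤ -2cV` for some `c > 0`, hence `V(t) ≤ V(0) e^{-2ct}`, and each of `‖A‖²`, `‖S‖²`,
`(D - d)²` is bounded by a multiple of `V`.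
-/

open ComplexConjugate Real Filter Topology Set

theorem mul_mul_le_of_sq_le_four_mul {P Q b : ℝ} (hP : 0 ≤ P) (hQ : 0 ≤ Q)
    (h : b ^ 2 ≤ 4 * P * Q) (x y : ℝ) : b * x * y ≤ P * x ^ 2 + Q * y ^ 2 := by
  rcases hP.eq_or_lt with rfl | hP
  · have hb : b = 0 := by nlinarith [sq_nonneg b]
    subst hb
    nlinarith [sq_nonneg y]
  · have : 0 ≤ P * (P * x ^ 2 + Q * y ^ 2 - b * x * y) := by
      nlinarith [sq_nonneg (P * x - b * y / 2), mul_nonneg (sub_nonneg.2 h) (sq_nonneg y)]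
    nlinarith [(mul_nonneg_iff_of_pos_left hP).1 this]

theorem exists_pos_sq_mul_lt {K g d : ℝ} (hK : 0 < K) (h : g ^ 2 * d < K) :
    ∃ ρ > 0, (g * (ρ + d)) ^ 2 < 4 * ρ * K := by
  rcases eq_or_ne g 0 with rfl | hg
  · exact ⟨1, one_pos, by simpa using hK⟩
  have hg2 : 0 < g ^ 2 := by positivity
  -- the weight with `g² (ρ + d) = 2K`, for which the claim reduces to `d < ρ`
  set ρ := (2 * K - g ^ 2 * d) / g ^ 2 with hρ
  have hgρ : g ^ 2 * ρ = 2 * K - g ^ 2 * d := by rw [hρ]; field_simp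
  refine ⟨ρ, div_pos (by linarith) hg2, ?_⟩
  have hsq : (g * (ρ + d)) ^ 2 = 2 * K * (ρ + d) := by linear_combination (ρ + d) * hgρ
  have hdρ : d < ρ := by nlinarith
  nlinarith

theorem exists_pos_le_mul_sub_mul_sub {κ γ ρ b : ℝ} (hκ : 0 < κ) (hγ : 0 < γ)
    (h : b < 4 * ρ * κ * γ) : ∃ c > 0, c ≤ κ ∧ c ≤ γ ∧ b ≤ 4 * ρ * (κ - c) * (γ - c) := by
  have hcont : ContinuousAt (fun c : ℝ ↦ 4 * ρ * (κ - c) * (γ - c)) 0 := by fun_prop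
  have hsmall : ∀ᶠ c in 𝓝[>] (0 : ℝ), c < κ ∧ c < γ ∧ b < 4 * ρ * (κ - c) * (γ - c) :=
    nhdsWithin_le_nhds <| (eventually_lt_nhds hκ).and <| (eventually_lt_nhds hγ).and <|
      continuousAt_const.eventually_lt hcont (by simpa using h)
  obtain ⟨c, ⟨hκc, hγc, hb⟩, hc⟩ := (hsmall.and self_mem_nhdsWithin).exists
  exact ⟨c, hc, hκc.le, hγc.le, hb.le⟩

theorem le_mul_exp_of_hasDerivAt_le_neg_mul {V V' : ℝ → ℝ} {k : ℝ}
    (hV : ∀ t ≥ 0, HasDerivAt V (V' t) t) (hV' : ∀ t ≥ 0, V' t ≤ -k * V t) {t : ℝ}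
    (ht : 0 ≤ t) : V t ≤ V 0 * exp (-k * t) := by
  have hW : ∀ τ ≥ 0, HasDerivAt (fun τ ↦ V τ * exp (k * τ))
      (V' τ * exp (k * τ) + V τ * (exp (k * τ) * (k * 1))) τ := fun τ hτ ↦
    (hV τ hτ).mul ((hasDerivAt_id' τ).const_mul k).exp
  have hanti : AntitoneOn (fun τ ↦ V τ * exp (k * τ)) (Ici 0) := by
    refine antitoneOn_of_hasDerivWithinAt_nonpos (convex_Ici 0)
      (f' := fun τ ↦ V' τ * exp (k * τ) + V τ * (exp (k * τ) * (k * 1)))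
      (fun τ hτ ↦ (hW τ hτ).continuousAt.continuousWithinAt) (fun τ hτ ↦ ?_) (fun τ hτ ↦ ?_)
    · rw [interior_Ici] at hτ
      exact (hW τ (le_of_lt hτ)).hasDerivWithinAt
    · rw [interior_Ici] at hτ
      have := hV' τ (le_of_lt hτ)
      nlinarith [exp_pos (k * τ)]
  have h := hanti self_mem_Ici ht ht
  simp only [mul_zero, exp_zero, mul_one] at h
  rwa [neg_mul, exp_neg, ← div_eq_mul_inv, le_div_iff₀ (exp_pos _)]

theorem abs_le_sqrt_mul_exp_of_mul_sq_le {m K c t x : ℝ} (hm : 0 < m)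
    (h : m * x ^ 2 ≤ K * exp (-(2 * c) * t)) : |x| ≤ √(K / m) * exp (-c * t) := by
  have hexp : exp (-(2 * c) * t) = exp (-c * t) ^ 2 := by rw [← exp_nat_mul]; ring_nf
  have hx : x ^ 2 ≤ K / m * exp (-c * t) ^ 2 := by
    rw [div_mul_eq_mul_div, le_div_iff₀ hm, ← hexp]; linarith
  have := sqrt_le_sqrt hx
  rwa [sqrt_mul' _ (sq_nonneg _), sqrt_sq (exp_pos _).le, sqrt_sq_eq_abs] at this

noncomputable def lorenzLyapunov (ρ d : ℝ) (A S : ℝ → ℂ) (D : ℝ → ℝ) (t : ℝ) : ℝ :=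
  ρ * ‖A t‖ ^ 2 + ‖S t‖ ^ 2 + (D t - d) ^ 2 / 4

section Lorenz

variable {κ γ g d ω ρ c t : ℝ} {A S : ℝ → ℂ} {D : ℝ → ℝ}

theorem hasDerivAt_lorenzLyapunov
    (hA : HasDerivAt A (-((κ:ℂ) + (ω:ℂ) * Complex.I) * A t + (g:ℂ) * S t) t)
    (hS : HasDerivAt S (-((γ:ℂ) + (ω:ℂ) * Complex.I) * S t + (g:ℂ) * A t * (D t : ℂ)) t)
    (hD : HasDerivAt D (-4 * g * (conj (A t) * S t).re - 2 * γ * (D t - d)) t) :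
    HasDerivAt (lorenzLyapunov ρ d A S D) (-2 * κ * ρ * ‖A t‖ ^ 2 - 2 * γ * ‖S t‖ ^ 2
      - γ * (D t - d) ^ 2 + 2 * g * (ρ + d) * (conj (A t) * S t).re) t := by
  refine (((hA.norm_sq.const_mul ρ).add hS.norm_sq).add
    (((hD.sub_const d).pow 2).div_const 4)).congr_deriv ?_
  simp only [Complex.inner, Complex.mul_re, Complex.conj_re, Complex.conj_im, Complex.neg_re,
    Complex.neg_im, Complex.add_re, Complex.add_im, Complex.ofReal_re, Complex.ofReal_im,
    Complex.I_re, Complex.I_im, Complex.mul_im, Complex.sq_norm, Complex.normSq_apply]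
  ring

theorem lorenzLyapunov_deriv_le (hρ : 0 ≤ ρ) (hc : 0 ≤ c) (hcκ : c ≤ κ) (hcγ : c ≤ γ)
    (hdisc : (g * (ρ + d)) ^ 2 ≤ 4 * ρ * (κ - c) * (γ - c)) :
    -2 * κ * ρ * ‖A t‖ ^ 2 - 2 * γ * ‖S t‖ ^ 2 - γ * (D t - d) ^ 2
      + 2 * g * (ρ + d) * (conj (A t) * S t).re ≤ -(2 * c) * lorenzLyapunov ρ d A S D t := by
  have hre : g * (ρ + d) * (conj (A t) * S t).re ≤ |g * (ρ + d)| * ‖A t‖ * ‖S t‖ := by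
    calc _ ≤ |g * (ρ + d)| * |(conj (A t) * S t).re| := by
          rw [← abs_mul]; exact le_abs_self _
      _ ≤ |g * (ρ + d)| * ‖A t‖ * ‖S t‖ := by
          rw [mul_assoc, ← RCLike.norm_conj (A t), ← norm_mul]
          exact mul_le_mul_of_nonneg_left (Complex.abs_re_le_norm _) (abs_nonneg _)
  have hamgm := mul_mul_le_of_sq_le_four_mul (mul_nonneg hρ (sub_nonneg.2 hcκ))
    (sub_nonneg.2 hcγ) (b := |g * (ρ + d)|) (by rw [sq_abs]; linarith) ‖A t‖ ‖S t‖
  unfold lorenzLyapunov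
  nlinarith [sq_nonneg (D t - d)]

theorem mul_sq_le_lorenzLyapunov (hρ : 0 ≤ ρ) :
    min ρ (1 / 4) * ‖A t‖ ^ 2 ≤ lorenzLyapunov ρ d A S D t ∧
    min ρ (1 / 4) * ‖S t‖ ^ 2 ≤ lorenzLyapunov ρ d A S D t ∧
    min ρ (1 / 4) * (D t - d) ^ 2 ≤ lorenzLyapunov ρ d A S D t := by
  have hmρ := min_le_left ρ (1 / 4)
  have hm4 := min_le_right ρ (1 / 4)
  have hm0 : 0 ≤ min ρ (1 / 4) := le_min hρ (by norm_num)
  unfold lorenzLyapunov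
  refine ⟨?_, ?_, ?_⟩ <;>
    nlinarith [sq_nonneg ‖A t‖, sq_nonneg ‖S t‖, sq_nonneg (D t - d),
      mul_le_mul_of_nonneg_right hmρ (sq_nonneg ‖A t‖),
      mul_le_mul_of_nonneg_right hm4 (sq_nonneg ‖S t‖),
      mul_le_mul_of_nonneg_right hm4 (sq_nonneg (D t - d))]

end Lorenz

theorem lorenz_exponential_stability_general (κ γ g d ω : ℝ) (A S : ℝ → ℂ) (D : ℝ → ℝ)
    (hκ : 0 < κ) (hγ : 0 < γ)
    (hstab : g ^ 2 * d < κ * γ)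
    (hA : ∀ t ≥ (0:ℝ),
      HasDerivAt A (-((κ:ℂ) + (ω:ℂ) * Complex.I) * A t + (g:ℂ) * S t) t)
    (hS : ∀ t ≥ (0:ℝ),
      HasDerivAt S (-((γ:ℂ) + (ω:ℂ) * Complex.I) * S t + (g:ℂ) * A t * (D t : ℂ)) t)
    (hD : ∀ t ≥ (0:ℝ),
      HasDerivAt D (-4 * g * ((starRingEnd ℂ) (A t) * S t).re - 2 * γ * (D t - d)) t) :
    ∃ c > (0:ℝ), ∃ M : ℝ, ∀ t ≥ (0:ℝ),
      ‖A t‖ ≤ M * Real.exp (-c * t) ∧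
      ‖S t‖ ≤ M * Real.exp (-c * t) ∧
      |D t - d| ≤ M * Real.exp (-c * t) := by
  obtain ⟨ρ, hρ, hρd⟩ := exists_pos_sq_mul_lt (mul_pos hκ hγ) hstab
  obtain ⟨c, hc, hcκ, hcγ, hdisc⟩ :=
    exists_pos_le_mul_sub_mul_sub hκ hγ (b := (g * (ρ + d)) ^ 2) (by linarith)
  have hdecay : ∀ t ≥ 0, lorenzLyapunov ρ d A S D t
      ≤ lorenzLyapunov ρ d A S D 0 * exp (-(2 * c) * t) := fun t ht ↦
    le_mul_exp_of_hasDerivAt_le_neg_mul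
      (fun τ hτ ↦ hasDerivAt_lorenzLyapunov (hA τ hτ) (hS τ hτ) (hD τ hτ))
      (fun _ _ ↦ lorenzLyapunov_deriv_le hρ.le hc.le hcκ hcγ hdisc) ht
  have hm : 0 < min ρ (1 / 4) := lt_min hρ (by norm_num)
  refine ⟨c, hc, √(lorenzLyapunov ρ d A S D 0 / min ρ (1 / 4)), fun t ht ↦ ?_⟩
  obtain ⟨hAV, hSV, hDV⟩ :=
    mul_sq_le_lorenzLyapunov (d := d) (A := A) (S := S) (D := D) (t := t) hρ.le
  refine ⟨?_, ?_, abs_le_sqrt_mul_exp_of_mul_sq_le hm (hDV.trans (hdecay t ht))⟩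
  · simpa using abs_le_sqrt_mul_exp_of_mul_sq_le hm (hAV.trans (hdecay t ht))
  · simpa using abs_le_sqrt_mul_exp_of_mul_sq_le hm (hSV.trans (hdecay t ht))

/-- If `g²d < κγ`, then for any global solution of the complex Lorenz system the
field `A`, the polarization `S`, and `D - d` converge to `0` exponentially fast. -/
theorem lorenz_exponential_stability (κ γ g d ω : ℝ) (A S : ℝ → ℂ) (D : ℝ → ℝ)
    (hκ : 0 < κ) (hγ : 0 < γ) (hg : g ≠ 0) (hd1 : -1 < d) (hd2 : d < 1)
    (hstab : g ^ 2 * d < κ * γ)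
    (hA : ∀ t ≥ (0:ℝ),
      HasDerivAt A (-((κ:ℂ) + (ω:ℂ) * Complex.I) * A t + (g:ℂ) * S t) t)
    (hS : ∀ t ≥ (0:ℝ),
      HasDerivAt S (-((γ:ℂ) + (ω:ℂ) * Complex.I) * S t + (g:ℂ) * A t * (D t : ℂ)) t)
    (hD : ∀ t ≥ (0:ℝ),
      HasDerivAt D (-4 * g * ((starRingEnd ℂ) (A t) * S t).re - 2 * γ * (D t - d)) t) :
    ∃ c > (0:ℝ), ∃ M : ℝ, ∀ t ≥ (0:ℝ),
      ‖A t‖ ≤ M * Real.exp (-c * t) ∧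
      ‖S t‖ ≤ M * Real.exp (-c * t) ∧
      |D t - d| ≤ M * Real.exp (-c * t) :=
  lorenz_exponential_stability_general κ γ g d ω A S D hκ hγ hstab hA hS hD
end
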